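/- Let L be a Lie superalgebra over a field of characteristic ≠ 2 and f : L → L an even linear super-commuting map ([f(x),y] = [x,f(y)] for all x,y). Then for all x, y, u, w, z ∈ L: [[w,z], [u, f([x,y]) − [x, f(y)]]] = 0. -/

import Mathlib

/-! Put `δ(x,y) = [f x, y]`. Because `f` is super-commuting, `δ` is a super-biderivation of
degree `0`, and for any such `δ`, expanding `δ([x,u],[y,v])` with the left and with the right
Leibniz rule and then permuting the arguments in a cycle of length six gives
`[δ(x,y),[u,v]] = [[x,y],δ(u,v)]` once `2 ≠ 0`.

For the defect `ε(x,y) = f[x,y] - [x,f y]` one checks `[ε(x,y),z] = -[x,ε(y,z)]`. Together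
with the identity for `δ` this shows that `Q(a,b,c,d,e) = [[a,b],[c,ε(d,e)]]` changes only by
a sign when its arguments are shifted by two places. Five such shifts give back the original
arguments with total sign `-1`, so `2Q = 0` on homogeneous elements; since `Q` is additive in
each argument, it vanishes everywhere. -/

/-- The sign `(-1)^(i*j)` for degrees `i j : ZMod 2`, as an element of the field `F`. -/
def ssign (F : Type*) [Field F] (i j : ZMod 2) : F :=
  if i * j = 1 then -1 else 1

/-- A Lie superalgebra structure on an `F`-module `L`: a bilinear bracket together with a
`ZMod 2`-grading by submodules, such that the bracket is graded, super-skewsymmetric and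
satisfies the super Jacobi identity on homogeneous elements. -/
structure LieSuperAlg (F : Type*) [Field F] (L : Type*) [AddCommGroup L] [Module F L] where
  br : L → L → L
  br_add_left : ∀ x y z : L, br (x + y) z = br x z + br y z
  br_smul_left : ∀ (c : F) (x z : L), br (c • x) z = c • br x z
  br_add_right : ∀ x y z : L, br x (y + z) = br x y + br x z
  br_smul_right : ∀ (c : F) (x z : L), br x (c • z) = c • br x z
  G : ZMod 2 → Submodule F L
  isInternal : DirectSum.IsInternal G
  br_deg : ∀ {i j : ZMod 2} {x y : L}, x ∈ G i → y ∈ G j → br x y ∈ G (i + j)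
  super_skew : ∀ {i j : ZMod 2} {x y : L}, x ∈ G i → y ∈ G j →
    br x y = -(ssign F i j • br y x)
  super_jacobi : ∀ {i j k : ZMod 2} {x y z : L}, x ∈ G i → y ∈ G j → z ∈ G k →
    br x (br y z) = br (br x y) z + ssign F i j • br y (br x z)

variable {F : Type*} [Field F] {L : Type*} [AddCommGroup L] [Module F L]

/-- `δ : L × L → L` is a super-biderivation of degree `τ`. -/
structure IsSuperBiderivation (A : LieSuperAlg F L) (τ : ZMod 2) (δ : L → L → L) : Prop where
  add_left : ∀ x y z : L, δ (x + y) z = δ x z + δ y z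
  smul_left : ∀ (c : F) (x z : L), δ (c • x) z = c • δ x z
  add_right : ∀ x y z : L, δ x (y + z) = δ x y + δ x z
  smul_right : ∀ (c : F) (x z : L), δ x (c • z) = c • δ x z
  deg : ∀ {i j : ZMod 2} {x y : L}, x ∈ A.G i → y ∈ A.G j → δ x y ∈ A.G (i + j + τ)
  skew : ∀ {i j : ZMod 2} {x y : L}, x ∈ A.G i → y ∈ A.G j →
    δ x y = -(ssign F i j • δ y x)
  leibniz : ∀ {i j k : ZMod 2} {x y z : L}, x ∈ A.G i → y ∈ A.G j → z ∈ A.G k →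
    δ (A.br x y) z = ssign F τ i • A.br x (δ y z) + ssign F j k • A.br (δ x z) y

/-- `f : L → L` is an even linear super-commuting map. -/
structure IsSuperCommuting (A : LieSuperAlg F L) (f : L → L) : Prop where
  map_add : ∀ x y : L, f (x + y) = f x + f y
  map_smul : ∀ (c : F) (x : L), f (c • x) = c • f x
  even : ∀ {i : ZMod 2} {x : L}, x ∈ A.G i → f x ∈ A.G i
  comm : ∀ x y : L, A.br (f x) y = A.br x (f y)

/-- `γ : L → L` is a homogeneous element of the centroid `Γ(L)`, of degree `τ`. -/
structure InCentroid (A : LieSuperAlg F L) (τ : ZMod 2) (γ : L → L) : Prop where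
  map_add : ∀ x y : L, γ (x + y) = γ x + γ y
  map_smul : ∀ (c : F) (x : L), γ (c • x) = c • γ x
  deg : ∀ {i : ZMod 2} {x : L}, x ∈ A.G i → γ x ∈ A.G (i + τ)
  centroid : ∀ {i j : ZMod 2} {x y : L}, x ∈ A.G i → y ∈ A.G j →
    γ (A.br x y) = ssign F τ i • A.br x (γ y)

/-- The derived subalgebra `L' = [L, L]`, the span of all brackets. -/
def derived (A : LieSuperAlg F L) : Submodule F L :=
  Submodule.span F {z : L | ∃ x y : L, z = A.br x y}

/-- The center `Z(L)` as a submodule. -/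
def centerSub (A : LieSuperAlg F L) : Submodule F L where
  carrier := {v : L | ∀ x : L, A.br x v = 0}
  add_mem' := by
    intro a b ha hb x
    rw [A.br_add_right, ha x, hb x, add_zero]
  zero_mem' := by
    intro x
    simpa using A.br_smul_right (0 : F) x 0
  smul_mem' := by
    intro c a ha x
    rw [A.br_smul_right, ha x, smul_zero]

lemma ZMod.two_cases (i : ZMod 2) : i = 0 ∨ i = 1 := by
  revert i; decide

lemma ssign_comm (i j : ZMod 2) : ssign F i j = ssign F j i := by
  rw [ssign, ssign, mul_comm]

lemma ssign_mul_self (i j : ZMod 2) : ssign F i j * ssign F i j = 1 := by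
  unfold ssign; split <;> ring

lemma ssign_zero_left (j : ZMod 2) : ssign F 0 j = 1 := by
  simp [ssign]

lemma ssign_add_left (i j k : ZMod 2) : ssign F (i + j) k = ssign F i k * ssign F j k := by
  rcases i.two_cases with rfl | rfl <;> rcases j.two_cases with rfl | rfl <;>
    rcases k.two_cases with rfl | rfl <;> simp [ssign, CharTwo.add_self_eq_zero]

lemma ssign_add_right (i j k : ZMod 2) : ssign F i (j + k) = ssign F i j * ssign F i k := by
  rw [ssign_comm, ssign_add_left, ssign_comm j, ssign_comm k]

lemma ssign_zero_right (i : ZMod 2) : ssign F i 0 = 1 := by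
  simp [ssign]

lemma ssign_one_one : ssign F 1 1 = -1 := by
  simp [ssign]

lemma eq_zero_of_eq_neg_of_two_ne_zero {R M : Type*} [DivisionRing R] [AddCommGroup M]
    [Module R M] (h2 : (2 : R) ≠ 0) {v : M} (h : v = -v) : v = 0 := by
  have h2v : (2 : R) • v = 0 := by rw [two_smul]; nth_rewrite 1 [h]; exact neg_add_cancel v
  exact (smul_eq_zero.mp h2v).resolve_left h2

namespace LieSuperAlg

variable (A : LieSuperAlg F L)

def brₗ : L →ₗ[F] L →ₗ[F] L :=
  LinearMap.mk₂ F A.br A.br_add_left A.br_smul_left A.br_add_right A.br_smul_right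

@[simp] lemma br_zero_left (x : L) : A.br 0 x = 0 := A.brₗ.map_zero₂ x
@[simp] lemma br_zero_right (x : L) : A.br x 0 = 0 := (A.brₗ x).map_zero
lemma br_neg_left (x y : L) : A.br (-x) y = -A.br x y := A.brₗ.map_neg₂ x y
lemma br_neg_right (x y : L) : A.br x (-y) = -A.br x y := (A.brₗ x).map_neg y
lemma br_sub_left (x y z : L) : A.br (x - y) z = A.br x z - A.br y z := A.brₗ.map_sub₂ x y z
lemma br_sub_right (x y z : L) : A.br x (y - z) = A.br x y - A.br x z := (A.brₗ x).map_sub y z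

@[elab_as_elim]
theorem induction_on {motive : L → Prop} (v : L) (zero : motive 0)
    (add : ∀ a b, motive a → motive b → motive (a + b))
    (mem : ∀ i, ∀ a ∈ A.G i, motive a) : motive v :=
  Submodule.iSup_induction A.G (motive := motive)
    (A.isInternal.submodule_iSup_eq_top ▸ Submodule.mem_top) mem zero add

variable {A}

lemma br_br_left {i j k : ZMod 2} {x y z : L} (hx : x ∈ A.G i) (hy : y ∈ A.G j)
    (hz : z ∈ A.G k) :
    A.br (A.br x y) z = A.br x (A.br y z) - ssign F i j • A.br y (A.br x z) :=
  eq_sub_of_add_eq (A.super_jacobi hx hy hz).symm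

lemma smul_br_eq_neg_smul_br {i j k : ZMod 2} {a y : L} (ha : a ∈ A.G (i + k))
    (hy : y ∈ A.G j) : ssign F j k • A.br a y = -(ssign F i j • A.br y a) := by
  rw [A.super_skew ha hy, smul_neg, smul_smul, ssign_add_left, ssign_comm k j, ← mul_assoc,
    mul_comm (ssign F j k), mul_assoc, ssign_mul_self, mul_one]

end LieSuperAlg

namespace IsSuperBiderivation

variable {A : LieSuperAlg F L} {δ : L → L → L}

lemma mem (hδ : IsSuperBiderivation A 0 δ) {i j : ZMod 2} {x y : L} (hx : x ∈ A.G i)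
    (hy : y ∈ A.G j) : δ x y ∈ A.G (i + j) := by
  simpa using hδ.deg hx hy

lemma apply_br_left (hδ : IsSuperBiderivation A 0 δ) {i j k : ZMod 2} {x y z : L}
    (hx : x ∈ A.G i) (hy : y ∈ A.G j) (hz : z ∈ A.G k) :
    δ (A.br x y) z = A.br x (δ y z) - ssign F i j • A.br y (δ x z) := by
  rw [hδ.leibniz hx hy hz, ssign_zero_left, one_smul,
    LieSuperAlg.smul_br_eq_neg_smul_br (hδ.mem hx hz) hy, sub_eq_add_neg]

lemma apply_br_right (hδ : IsSuperBiderivation A 0 δ) {i j k : ZMod 2} {x y z : L}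
    (hx : x ∈ A.G i) (hy : y ∈ A.G j) (hz : z ∈ A.G k) :
    δ x (A.br y z) = A.br (δ x y) z + ssign F i j • A.br y (δ x z) := by
  rw [hδ.skew hx (A.br_deg hy hz), hδ.apply_br_left hy hz hx, hδ.skew hz hx, hδ.skew hy hx,
    A.super_skew (hδ.mem hx hy) hz]
  simp only [A.br_neg_right, A.br_smul_right]
  rcases i.two_cases with rfl | rfl <;> rcases j.two_cases with rfl | rfl <;>
    rcases k.two_cases with rfl | rfl <;>
    simp only [ssign_zero_left, ssign_zero_right, ssign_one_one, zero_add, add_zero,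
      CharTwo.add_self_eq_zero] <;> module

def defect (A : LieSuperAlg F L) (δ : L → L → L) (x y u v : L) : L :=
  A.br (δ x y) (A.br u v) - A.br (A.br x y) (δ u v)

lemma defect_swap_right (hδ : IsSuperBiderivation A 0 δ) {c d : ZMod 2} {x y u v : L}
    (hu : u ∈ A.G c) (hv : v ∈ A.G d) :
    defect A δ x y u v = -(ssign F c d • defect A δ x y v u) := by
  rw [defect, defect, A.super_skew hu hv, hδ.skew hu hv]
  simp only [A.br_neg_right, A.br_smul_right]
  module

lemma defect_exchange (hδ : IsSuperBiderivation A 0 δ) {i j c d : ZMod 2} {x y u v : L}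
    (hx : x ∈ A.G i) (hy : y ∈ A.G j) (hu : u ∈ A.G c) (hv : v ∈ A.G d) :
    defect A δ x y u v = (ssign F c j * (ssign F i c * ssign F i j)) • defect A δ u y x v := by
  have e1 := hδ.apply_br_left hx hu (A.br_deg hy hv)
  have e2 := hδ.apply_br_right hu hy hv
  have e3 := hδ.apply_br_right hx hy hv
  have e4 := hδ.apply_br_right (A.br_deg hx hu) hy hv
  have e5 := hδ.apply_br_left hx hu hy
  have e6 := hδ.apply_br_left hx hu hv
  rw [ssign_add_left] at e4
  have hleft : δ (A.br x u) (A.br y v)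
      = A.br x (A.br (δ u y) v) + ssign F c j • A.br x (A.br y (δ u v))
        - ssign F i c • A.br u (A.br (δ x y) v)
        - (ssign F i c * ssign F i j) • A.br u (A.br y (δ x v)) := by
    rw [e1, e2, e3]
    simp only [A.br_add_right, A.br_smul_right]
    module
  have hright : δ (A.br x u) (A.br y v)
      = A.br (A.br x (δ u y)) v - ssign F i c • A.br (A.br u (δ x y)) v
        + (ssign F i j * ssign F c j) • A.br y (A.br x (δ u v))
        - (ssign F i j * ssign F c j * ssign F i c) • A.br y (A.br u (δ x v)) := by
    rw [e4, e5, e6]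
    simp only [A.br_sub_left, A.br_smul_left, A.br_sub_right, A.br_smul_right]
    module
  have j1 := A.super_jacobi hx (hδ.mem hu hy) hv
  rw [ssign_add_right] at j1
  have j2 := A.super_jacobi hx hy (hδ.mem hu hv)
  have j3 := A.super_jacobi hu (hδ.mem hx hy) hv
  rw [ssign_add_right, ssign_comm c i] at j3
  have j4 := A.super_jacobi hu hy (hδ.mem hx hv)
  have hsq : (ssign F i c * ssign F i c) • A.br (δ x y) (A.br u v)
      = A.br (δ x y) (A.br u v) := by
    rw [ssign_mul_self, one_smul]
  have key : ssign F c j • defect A δ x y u v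
      = (ssign F i c * ssign F i j) • defect A δ u y x v := by
    unfold defect
    linear_combination (norm := module) hleft - hright + j1 + (ssign F c j) • j2
      - (ssign F i c) • j3 - (ssign F i c * ssign F i j) • j4 - (ssign F c j) • hsq
  rw [mul_smul, ← key, smul_smul, ssign_mul_self, one_smul]

theorem br_apply_br_eq_br_br_apply (hδ : IsSuperBiderivation A 0 δ) (h2 : (2 : F) ≠ 0)
    {i j c d : ZMod 2} {x y u v : L}
    (hx : x ∈ A.G i) (hy : y ∈ A.G j) (hu : u ∈ A.G c) (hv : v ∈ A.G d) :
    A.br (δ x y) (A.br u v) = A.br (A.br x y) (δ u v) := by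
  have hsign : (ssign F c j * (ssign F i c * ssign F i j)) * (ssign F i d *
      ((ssign F d j * (ssign F c d * ssign F c j)) * (ssign F c i *
      ((ssign F i j * (ssign F d i * ssign F d j)) * ssign F d c)))) = (1 : F) := by
    rw [ssign_comm c i, ssign_comm d i, ssign_comm d c]
    ring_nf
    simp [pow_two, ssign_mul_self]
  have hcycle : defect A δ x y u v = -defect A δ x y u v := by
    calc defect A δ x y u v
        = _ := hδ.defect_exchange hx hy hu hv
      _ = _ := by rw [hδ.defect_swap_right hx hv]
      _ = _ := by rw [hδ.defect_exchange hu hy hv hx]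
      _ = _ := by rw [hδ.defect_swap_right hu hx]
      _ = _ := by rw [hδ.defect_exchange hv hy hx hu]
      _ = _ := by rw [hδ.defect_swap_right hv hu]
      _ = -(((ssign F c j * (ssign F i c * ssign F i j)) * (ssign F i d *
          ((ssign F d j * (ssign F c d * ssign F c j)) * (ssign F c i *
          ((ssign F i j * (ssign F d i * ssign F d j)) * ssign F d c))))) •
            defect A δ x y u v) := by module
      _ = -defect A δ x y u v := by rw [hsign, one_smul]
  exact sub_eq_zero.mp (eq_zero_of_eq_neg_of_two_ne_zero h2 hcycle)

end IsSuperBiderivation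

def centroidDefect (A : LieSuperAlg F L) (f : L → L) (x y : L) : L :=
  f (A.br x y) - A.br x (f y)

namespace IsSuperCommuting

variable {A : LieSuperAlg F L} {f : L → L}

lemma map_zero (hf : IsSuperCommuting A f) : f 0 = 0 := by
  simpa using hf.map_smul 0 0

theorem isSuperBiderivation (hf : IsSuperCommuting A f) :
    IsSuperBiderivation A 0 (fun x y => A.br (f x) y) where
  add_left x y z := by rw [hf.map_add, A.br_add_left]
  smul_left c x z := by rw [hf.map_smul, A.br_smul_left]
  add_right x y z := A.br_add_right _ y z
  smul_right c x z := A.br_smul_right c _ z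
  deg hx hy := by simpa using A.br_deg (hf.even hx) hy
  skew hx hy := by rw [A.super_skew (hf.even hx) hy, ← hf.comm]
  leibniz {i j k x y z} hx hy hz := by
    rw [hf.comm, A.br_br_left hx hy (hf.even hz), ← hf.comm y, ← hf.comm x, ssign_zero_left,
      one_smul, LieSuperAlg.smul_br_eq_neg_smul_br (A.br_deg (hf.even hx) hz) hy,
      sub_eq_add_neg]

lemma br_apply_br_eq_br_br_apply (hf : IsSuperCommuting A f) (h2 : (2 : F) ≠ 0)
    {i j c d : ZMod 2} {x y u v : L}
    (hx : x ∈ A.G i) (hy : y ∈ A.G j) (hu : u ∈ A.G c) (hv : v ∈ A.G d) :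
    A.br (A.br (f x) y) (A.br u v) = A.br (A.br x y) (A.br (f u) v) :=
  hf.isSuperBiderivation.br_apply_br_eq_br_br_apply h2 hx hy hu hv

lemma centroidDefect_mem (hf : IsSuperCommuting A f) {i j : ZMod 2} {x y : L}
    (hx : x ∈ A.G i) (hy : y ∈ A.G j) : centroidDefect A f x y ∈ A.G (i + j) :=
  sub_mem (hf.even (A.br_deg hx hy)) (A.br_deg hx (hf.even hy))

lemma centroidDefect_add_left (hf : IsSuperCommuting A f) (x x' y : L) :
    centroidDefect A f (x + x') y = centroidDefect A f x y + centroidDefect A f x' y := by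
  simp only [centroidDefect, A.br_add_left, hf.map_add]
  abel

lemma centroidDefect_add_right (hf : IsSuperCommuting A f) (x y y' : L) :
    centroidDefect A f x (y + y') = centroidDefect A f x y + centroidDefect A f x y' := by
  simp only [centroidDefect, A.br_add_right, hf.map_add]
  abel

lemma centroidDefect_skew (hf : IsSuperCommuting A f) {i j : ZMod 2} {x y : L}
    (hx : x ∈ A.G i) (hy : y ∈ A.G j) :
    centroidDefect A f x y = -(ssign F i j • centroidDefect A f y x) := by
  rw [centroidDefect, centroidDefect, A.super_skew hx hy, A.super_skew hx (hf.even hy),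
    ← hf.comm y x, ← neg_smul, hf.map_smul, neg_smul]
  module

lemma br_centroidDefect (hf : IsSuperCommuting A f) (u x y : L) :
    A.br u (centroidDefect A f x y) = A.br (f u) (A.br x y) - A.br u (A.br (f x) y) := by
  rw [centroidDefect, A.br_sub_right, ← hf.comm u, ← hf.comm x]

lemma centroidDefect_br (hf : IsSuperCommuting A f) {i j k : ZMod 2} {x y z : L}
    (hx : x ∈ A.G i) (hy : y ∈ A.G j) (hz : z ∈ A.G k) :
    A.br (centroidDefect A f x y) z = ssign F i j • A.br y (centroidDefect A f x z) := by
  have t1 : A.br (f (A.br x y)) z = A.br (A.br x y) (f z) := hf.comm _ _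
  have t2 := A.br_br_left hx hy (hf.even hz)
  have t3 : A.br x (A.br y (f z)) = A.br x (A.br (f y) z) := by rw [hf.comm y z]
  have t4 := A.br_br_left hx (hf.even hy) hz
  have t5 : A.br (f y) (A.br x z) = A.br y (f (A.br x z)) := hf.comm _ _
  rw [centroidDefect, centroidDefect, A.br_sub_left, A.br_sub_right]
  linear_combination (norm := module) t1 + t2 + t3 - t4 + (ssign F i j) • t5

lemma centroidDefect_br_eq_neg_br (hf : IsSuperCommuting A f) {i j k : ZMod 2} {x y z : L}
    (hx : x ∈ A.G i) (hy : y ∈ A.G j) (hz : z ∈ A.G k) :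
    A.br (centroidDefect A f x y) z = -A.br x (centroidDefect A f y z) := by
  rw [hf.centroidDefect_skew hx hy, A.br_neg_left, A.br_smul_left, hf.centroidDefect_br hy hx hz,
    smul_smul, ssign_comm j i, ssign_mul_self, one_smul]

lemma br_br_br_centroidDefect_eq_neg (hf : IsSuperCommuting A f) (h2 : (2 : F) ≠ 0)
    {m k c i j : ZMod 2} {w z u x y : L}
    (hw : w ∈ A.G m) (hz : z ∈ A.G k) (hu : u ∈ A.G c) (hx : x ∈ A.G i) (hy : y ∈ A.G j) :
    A.br (A.br w z) (A.br u (centroidDefect A f x y))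
      = -A.br (A.br (centroidDefect A f w z) u) (A.br x y) := by
  have hsplit : A.br (A.br w z) (A.br u (centroidDefect A f x y))
      = A.br (A.br w z) (A.br (f u) (A.br x y))
        - A.br (A.br w z) (A.br u (A.br (f x) y)) := by
    rw [hf.br_centroidDefect, A.br_sub_right]
  have hδ₁ := hf.br_apply_br_eq_br_br_apply h2 hw hz hu (A.br_deg hx hy)
  have hjac₁ := A.super_jacobi (A.br_deg hw hz) hu (A.br_deg (hf.even hx) hy)
  have hδ₂ := hf.br_apply_br_eq_br_br_apply h2 hw hz hx hy
  have hδ₃ := hf.br_apply_br_eq_br_br_apply h2 (A.br_deg hw hz) hu hx hy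
  have hjac₂ := A.super_jacobi (A.br_deg (hf.even hw) hz) hu (A.br_deg hx hy)
  have hC : A.br u (A.br (A.br (f w) z) (A.br x y))
      = A.br u (A.br (A.br w z) (A.br (f x) y)) := by rw [hδ₂]
  have hfwz : A.br (A.br (A.br (f w) z) u) (A.br x y)
      = A.br (A.br (f (A.br w z)) u) (A.br x y)
        - A.br (A.br (centroidDefect A f w z) u) (A.br x y) := by
    rw [centroidDefect, A.br_sub_left, A.br_sub_left, hf.comm w z]
    abel
  linear_combination (norm := module) hsplit - hδ₁ + hjac₂
    + (ssign F (m + k) c) • hC - hjac₁ + hfwz + hδ₃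

lemma br_br_br_centroidDefect_rotate (hf : IsSuperCommuting A f) (h2 : (2 : F) ≠ 0)
    {p q r s t : ZMod 2} {a b c d e : L}
    (ha : a ∈ A.G p) (hb : b ∈ A.G q) (hc : c ∈ A.G r) (hd : d ∈ A.G s) (he : e ∈ A.G t) :
    A.br (A.br a b) (A.br c (centroidDefect A f d e))
      = -(ssign F (p + q) (r + s + t) •
          A.br (A.br c d) (A.br e (centroidDefect A f a b))) := by
  rw [← neg_neg (A.br c (centroidDefect A f d e)), ← hf.centroidDefect_br_eq_neg_br hc hd he,
    A.br_neg_right, A.super_skew (A.br_deg ha hb) (A.br_deg (hf.centroidDefect_mem hc hd) he),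
    hf.br_br_br_centroidDefect_eq_neg h2 hc hd he ha hb]
  module

lemma br_br_br_centroidDefect_eq_zero_of_mem (hf : IsSuperCommuting A f) (h2 : (2 : F) ≠ 0)
    {m k c i j : ZMod 2} {w z u x y : L}
    (hw : w ∈ A.G m) (hz : z ∈ A.G k) (hu : u ∈ A.G c) (hx : x ∈ A.G i) (hy : y ∈ A.G j) :
    A.br (A.br w z) (A.br u (centroidDefect A f x y)) = 0 := by
  have hsign : ssign F (m + k) (c + i + j) * (ssign F (c + i) (j + m + k) *
      (ssign F (j + m) (k + c + i) * (ssign F (k + c) (i + j + m) *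
        ssign F (i + j) (m + k + c)))) = (1 : F) := by
    rcases m.two_cases with rfl | rfl <;> rcases k.two_cases with rfl | rfl <;>
      rcases c.two_cases with rfl | rfl <;> rcases i.two_cases with rfl | rfl <;>
      rcases j.two_cases with rfl | rfl <;> simp [ssign, CharTwo.add_self_eq_zero]
  apply eq_zero_of_eq_neg_of_two_ne_zero h2
  calc A.br (A.br w z) (A.br u (centroidDefect A f x y))
      = _ := hf.br_br_br_centroidDefect_rotate h2 hw hz hu hx hy
    _ = _ := by rw [hf.br_br_br_centroidDefect_rotate h2 hu hx hy hw hz]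
    _ = _ := by rw [hf.br_br_br_centroidDefect_rotate h2 hy hw hz hu hx]
    _ = _ := by rw [hf.br_br_br_centroidDefect_rotate h2 hz hu hx hy hw]
    _ = _ := by rw [hf.br_br_br_centroidDefect_rotate h2 hx hy hw hz hu]
    _ = -((ssign F (m + k) (c + i + j) * (ssign F (c + i) (j + m + k) *
          (ssign F (j + m) (k + c + i) * (ssign F (k + c) (i + j + m) *
            ssign F (i + j) (m + k + c))))) •
          A.br (A.br w z) (A.br u (centroidDefect A f x y))) := by module
    _ = _ := by rw [hsign, one_smul]

theorem br_br_br_centroidDefect_eq_zero (hf : IsSuperCommuting A f) (h2 : (2 : F) ≠ 0)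
    (w z u x y : L) : A.br (A.br w z) (A.br u (centroidDefect A f x y)) = 0 := by
  induction w using A.induction_on with
  | zero => simp
  | add w w' hw hw' => rw [A.br_add_left, A.br_add_left, hw, hw', add_zero]
  | mem m w hw =>
  induction z using A.induction_on with
  | zero => simp
  | add z z' hz hz' => rw [A.br_add_right, A.br_add_left, hz, hz', add_zero]
  | mem k z hz =>
  induction u using A.induction_on with
  | zero => simp
  | add u u' hu hu' => rw [A.br_add_left, A.br_add_right, hu, hu', add_zero]
  | mem c u hu =>
  induction x using A.induction_on with
  | zero => simp [centroidDefect, hf.map_zero]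
  | add x x' hx hx' =>
    rw [hf.centroidDefect_add_left, A.br_add_right, A.br_add_right, hx, hx', add_zero]
  | mem i x hx =>
  induction y using A.induction_on with
  | zero => simp [centroidDefect, hf.map_zero]
  | add y y' hy hy' =>
    rw [hf.centroidDefect_add_right, A.br_add_right, A.br_add_right, hy, hy', add_zero]
  | mem j y hy => exact hf.br_br_br_centroidDefect_eq_zero_of_mem h2 hw hz hu hx hy

end IsSuperCommuting

theorem stmt9 (h2 : (2 : F) ≠ 0) (A : LieSuperAlg F L) (f : L → L)
    (hf : IsSuperCommuting A f) :
    ∀ x y u w z : L,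
      A.br (A.br w z) (A.br u (f (A.br x y) - A.br x (f y))) = 0 :=
  fun x y u w z => hf.br_br_br_centroidDefect_eq_zero h2 w z u x y
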